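/- arXiv:2203.00070 — 5 statements merged into one kernel-verified Lean document; each statement's English description precedes it below -/
import Mathlib

section
/- Let X be a finite set and Y any set. Let d : (ℕ → X) → Y be a function such that for every sequence S : ℕ → X there exists k ∈ ℕ with d(S) = d(S|_k · T) for every T : ℕ → X (where S|_k · T denotes the sequence agreeing with S on the first k terms and with T thereafter). Then there exists K ∈ ℕ such that for every sequence S and every T : ℕ → X, d(S) = d(S|_K · T). That is, every stopping rule is a uniform-stopping rule. -/
/-- Concatenation: `concat S k T` agrees with `S` on the first `k` positions
and equals `T` shifted thereafter. -/
def concat {X : Type*} (S : ℕ → X) (k : ℕ) (T : ℕ → X) : ℕ → X :=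
  fun i => if i < k then S i else T (i - k)

lemma eq_of_agree_prefix {X Y : Type*} (d : (ℕ → X) → Y) (s S : ℕ → X) (k : ℕ)
    (hk : ∀ T : ℕ → X, d (concat s k T) = d s)
    (hagree : ∀ i < k, S i = s i) : d S = d s := by
  have : S = concat s k (fun i => S (k + i)) := by
    funext i
    simp only [concat]
    split_ifs with h
    · exact hagree i h
    · congr 1; omega
  rw [this, hk]

/-- Every stopping rule is a uniform-stopping rule. -/
theorem stopping_is_uniform_stopping {X Y : Type*} [Finite X] [Nonempty X]
    (d : (ℕ → X) → Y)
    (hstop : ∀ S : ℕ → X, ∃ k : ℕ, ∀ T : ℕ → X, d (concat S k T) = d S) :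
    ∃ K : ℕ, ∀ (S T : ℕ → X), d (concat S K T) = d S := by
  classical
  letI : TopologicalSpace X := ⊥
  haveI : DiscreteTopology X := ⟨rfl⟩
  choose k hk using hstop
  set U : (ℕ → X) → Set (ℕ → X) := fun s => {S | ∀ i < k s, S i = s i} with hU
  have hopen : ∀ s : ℕ → X, IsOpen (U s) := by
    intro s
    have : U s = ⋂ i ∈ Finset.range (k s), (fun S : ℕ → X => S i) ⁻¹' {s i} := by
      ext S
      simp [hU, Finset.mem_range]
    rw [this]
    exact isOpen_biInter_finset fun i _ =>
      (continuous_apply i).isOpen_preimage _ (isOpen_discrete _)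
  have hcover : (Set.univ : Set (ℕ → X)) ⊆ ⋃ s, U s := by
    intro S _
    exact Set.mem_iUnion.2 ⟨S, fun i _ => rfl⟩
  obtain ⟨t, ht⟩ := isCompact_univ.elim_finite_subcover U hopen hcover
  refine ⟨t.sup k, fun S T => ?_⟩
  obtain ⟨s, hst, hSs⟩ := Set.mem_iUnion₂.1 (ht (Set.mem_univ S))
  have hks : k s ≤ t.sup k := Finset.le_sup hst
  have h1 : d S = d s := eq_of_agree_prefix d s S (k s) (hk s) hSs
  have h2 : d (concat S (t.sup k) T) = d s := by
    refine eq_of_agree_prefix d s _ (k s) (hk s) fun i hi => ?_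
    have : i < t.sup k := lt_of_lt_of_le hi hks
    simp only [concat, if_pos this]
    exact hSs i hi
  rw [h2, h1]
end

section
/- Let X be a finite set with discrete topology and d : (ℕ → X) → Y a non-constant stopping rule with stopping-time function k_d. For each j ∈ ℕ, the set A_j := { S : ℕ → X | k_d(S) ≥ j } is closed (hence compact) in the product topology on ℕ → X. -/
open Topology

section

variable {X Y : Type*}

lemma concat_shift_self (S : ℕ → X) (k : ℕ) : concat S k (fun i => S (i + k)) = S := by
  funext i
  simp only [concat]
  split_ifs
  · rfl
  · congr 1; omega

lemma concat_congr_left {S S' : ℕ → X} {k : ℕ} (h : ∀ i < k, S' i = S i) (T : ℕ → X) :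
    concat S' k T = concat S k T := by
  funext i
  simp only [concat]
  split_ifs with hi
  · exact h i hi
  · rfl

lemma stoppingTime_le_of_agree {d : (ℕ → X) → Y} {kd : (ℕ → X) → ℕ} {S S' : ℕ → X}
    (hS : ∀ T, d (concat S (kd S) T) = d S)
    (hS' : ∀ k < kd S', ∃ T, d (concat S' k T) ≠ d S')
    (hagree : ∀ i < kd S, S' i = S i) : kd S' ≤ kd S := by
  have hdS' : d S' = d S := by
    rw [← hS (fun i => S' (i + kd S)), ← concat_congr_left hagree, concat_shift_self]
  by_contra! hlt
  obtain ⟨T, hT⟩ := hS' (kd S) hlt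
  exact hT (by rw [concat_congr_left hagree, hS, hdS'])

lemma isClosed_setOf_le_stoppingTime [TopologicalSpace X] [DiscreteTopology X]
    {d : (ℕ → X) → Y} {kd : (ℕ → X) → ℕ}
    (hstop : ∀ S T, d (concat S (kd S) T) = d S)
    (hmin : ∀ S, ∀ k < kd S, ∃ T, d (concat S k T) ≠ d S) (j : ℕ) :
    IsClosed {S : ℕ → X | j ≤ kd S} := by
  refine isOpen_compl_iff.mp (isOpen_iff_mem_nhds.mpr fun S hS => ?_)
  have hcylinder : Set.pi (Set.Iio (kd S)) (fun i => {S i}) ∈ 𝓝 S :=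
    (isOpen_set_pi (Set.finite_Iio _) fun i _ => isOpen_discrete _).mem_nhds (by simp)
  filter_upwards [hcylinder] with S' hS'
  exact not_le.mpr
    ((stoppingTime_le_of_agree (hstop S) (hmin S') hS').trans_lt (not_le.mp hS))

end

theorem stoppingTime_superlevel_closed_compact_general {X Y : Type*} [Finite X]
    [TopologicalSpace X] [DiscreteTopology X]
    (d : (ℕ → X) → Y)
    (kd : (ℕ → X) → ℕ)
    (hkd : ∀ S : ℕ → X, (∀ T : ℕ → X, d (concat S (kd S) T) = d S) ∧
      ∀ k < kd S, ∃ T : ℕ → X, d (concat S k T) ≠ d S)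
    (j : ℕ) :
    IsClosed {S : ℕ → X | j ≤ kd S} ∧ IsCompact {S : ℕ → X | j ≤ kd S} := by
  have hclosed := isClosed_setOf_le_stoppingTime (fun S => (hkd S).1) (fun S => (hkd S).2) j
  exact ⟨hclosed, hclosed.isCompact⟩

/-- For a non-constant stopping rule `d` with stopping-time function `k_d`,
each set `A_j = {S | k_d S ≥ j}` is closed, hence compact, in the product topology. -/
theorem stoppingTime_superlevel_closed_compact {X Y : Type*} [Finite X]
    [TopologicalSpace X] [DiscreteTopology X]
    (d : (ℕ → X) → Y)
    (hnc : ∃ S S' : ℕ → X, d S ≠ d S')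
    (kd : (ℕ → X) → ℕ)
    (hkd : ∀ S : ℕ → X, (∀ T : ℕ → X, d (concat S (kd S) T) = d S) ∧
      ∀ k < kd S, ∃ T : ℕ → X, d (concat S k T) ≠ d S)
    (j : ℕ) :
    IsClosed {S : ℕ → X | j ≤ kd S} ∧ IsCompact {S : ℕ → X | j ≤ kd S} :=
  stoppingTime_superlevel_closed_compact_general d kd hkd j
end

section
/- Let X be a finite set, d : (ℕ → X) → Y a stopping rule with stopping-time function k_d, and suppose k_d is unbounded. For each j ∈ ℕ let A_j := { S | k_d(S) ≥ j }. Then each A_j is nonempty, the family (A_j) is nested decreasing, and the intersection ⋂_j A_j is empty; this contradicts the finite intersection property of closed sets in the compact space ℕ → X, so k_d is in fact bounded. -/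
/-- If `S'` agrees with `S` on the first `kd S` coordinates, then `kd S' ≤ kd S`. -/
lemma kd_local {X Y : Type*} (d : (ℕ → X) → Y) (kd : (ℕ → X) → ℕ)
    (hkd : ∀ S : ℕ → X, (∀ T : ℕ → X, d (concat S (kd S) T) = d S) ∧
      ∀ k < kd S, ∃ T : ℕ → X, d (concat S k T) ≠ d S)
    (S S' : ℕ → X) (hag : ∀ i < kd S, S' i = S i) : kd S' ≤ kd S := by
  have hc : ∀ T, concat S' (kd S) T = concat S (kd S) T := by
    intro T; funext i; simp only [concat]; split
    · exact hag i (by assumption)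
    · rfl
  have hS' : concat S' (kd S) (fun i => S' (i + kd S)) = S' := by
    funext i; simp only [concat]; split
    · rfl
    · congr 1; omega
  have hdd : d S' = d S := by
    rw [← hS', hc]; exact (hkd S).1 _
  by_contra h
  push_neg at h
  obtain ⟨T, hT⟩ := (hkd S').2 (kd S) h
  rw [hc, (hkd S).1, ← hdd] at hT
  exact hT rfl

lemma Aj_closed {X Y : Type*} [TopologicalSpace X] [DiscreteTopology X]
    (d : (ℕ → X) → Y) (kd : (ℕ → X) → ℕ)
    (hkd : ∀ S : ℕ → X, (∀ T : ℕ → X, d (concat S (kd S) T) = d S) ∧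
      ∀ k < kd S, ∃ T : ℕ → X, d (concat S k T) ≠ d S)
    (j : ℕ) : IsClosed {S : ℕ → X | j ≤ kd S} := by
  rw [← isOpen_compl_iff, isOpen_iff_mem_nhds]
  intro S hS
  simp only [Set.mem_compl_iff, Set.mem_setOf_eq, not_le] at hS
  have hmem : (⋂ i ∈ Finset.range j, (fun S' : ℕ → X => S' i) ⁻¹' {S i}) ∈ nhds S := by
    refine (Filter.biInter_finset_mem _).2 fun i _ => ?_
    exact IsOpen.mem_nhds ((isOpen_discrete _).preimage (continuous_apply i)) rfl
  refine Filter.mem_of_superset hmem ?_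
  intro S' hS'
  simp only [Set.mem_iInter, Finset.mem_range, Set.mem_preimage,
    Set.mem_singleton_iff] at hS'
  simp only [Set.mem_compl_iff, Set.mem_setOf_eq, not_le]
  exact lt_of_le_of_lt (kd_local d kd hkd S S' fun i hi => hS' i (lt_trans hi hS)) hS

/-- If the stopping-time function `k_d` of a stopping rule were unbounded, the nested
nonempty sets `A_j = {S | k_d S ≥ j}` would have empty intersection, contradicting
compactness; hence `k_d` is bounded. -/
theorem stoppingTime_bounded {X Y : Type*} [Finite X]
    [TopologicalSpace X] [DiscreteTopology X]
    (d : (ℕ → X) → Y)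
    (kd : (ℕ → X) → ℕ)
    (hkd : ∀ S : ℕ → X, (∀ T : ℕ → X, d (concat S (kd S) T) = d S) ∧
      ∀ k < kd S, ∃ T : ℕ → X, d (concat S k T) ≠ d S) :
    ((∀ j : ℕ, ∃ S : ℕ → X, j ≤ kd S) →
      (∀ j : ℕ, ({S : ℕ → X | j ≤ kd S}).Nonempty ∧
        {S : ℕ → X | j + 1 ≤ kd S} ⊆ {S : ℕ → X | j ≤ kd S}) ∧
      (⋂ j : ℕ, {S : ℕ → X | j ≤ kd S}) = ∅) ∧
    ∃ K : ℕ, ∀ S : ℕ → X, kd S ≤ K := by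
  constructor
  · intro hunb
    refine ⟨fun j => ⟨hunb j, fun S hS => le_trans (Nat.le_succ j) hS⟩, ?_⟩
    ext S
    simp only [Set.mem_iInter, Set.mem_setOf_eq, Set.mem_empty_iff_false, iff_false]
    push_neg
    exact ⟨kd S + 1, by omega⟩
  · by_contra h
    push_neg at h
    have hne : ∀ j, ({S : ℕ → X | j ≤ kd S}).Nonempty := fun j =>
      (h j).imp fun S hS => le_of_lt hS
    have hcl := Aj_closed d kd hkd
    have hint := IsCompact.nonempty_iInter_of_sequence_nonempty_isCompact_isClosed
      (t := fun j => {S : ℕ → X | j ≤ kd S})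
      (fun n S hS => le_trans (Nat.le_succ n) hS) hne
      ((hcl 0).isCompact) hcl
    obtain ⟨S, hS⟩ := hint
    simp only [Set.mem_iInter, Set.mem_setOf_eq] at hS
    exact absurd (hS (kd S + 1)) (by omega)
end

section
/- Let X be finite, w : X → ℝ≥0 a weight function, v > 0 a threshold, and define for a sequence S, position N, and alternative x the cumulative weight W_S^N(x) := (number of i ≤ N with S(i) = x) · w(x). Suppose d is the Cardinal Satisficing Rule: d(S) = x iff there is N with W_S^N(x) ≥ v > W_S^N(y) for all y ≠ x, and assume such an x and N exist for every S. Then d satisfies Monotonicity: if d(S) = x and S' is obtained from S either by deleting a single term not equal to x, or by swapping adjacent terms S(k), S(k+1) with S(k+1) = x, then d(S') = x. -/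
/-- Cumulative weight of alternative `x` among the first `N` terms of `S`. -/
def cumWeight {X : Type*} [DecidableEq X] (w : X → ℝ) (S : ℕ → X) (N : ℕ) (x : X) : ℝ :=
  ((Finset.range N).filter (fun i => S i = x)).card * w x

/-!
Whether `N` is a stopping time selecting `x` depends only on the occurrence counts of the
first `N` terms, and with nonnegative weights it survives any change that does not lower the
count of `x` nor raise another count. Deleting a term `S k ≠ x` before time `N` lowers only
the count of `S k` if we stop one step earlier. Swapping `S k` with `S (k + 1) = x` permutes the
first `N` terms when `k + 1 < N`, and when `N = k + 1` it trades the occurrence `S k` for an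
occurrence of `x`.
-/

open Finset

section PrefixCount

variable {X : Type*} [DecidableEq X]

def prefixCount (S : ℕ → X) (N : ℕ) (y : X) : ℕ := #{i ∈ range N | S i = y}

def deleteAt (S : ℕ → X) (k : ℕ) : ℕ → X := fun i => if i < k then S i else S (i + 1)

lemma cumWeight_eq_prefixCount_mul (w : X → ℝ) (S : ℕ → X) (N : ℕ) (y : X) :
    cumWeight w S N y = prefixCount S N y * w y := rfl

lemma prefixCount_eq_sum_fin (S : ℕ → X) (N : ℕ) (y : X) :
    prefixCount S N y = ∑ i : Fin N, if S i = y then 1 else 0 := by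
  rw [prefixCount, card_filter, Fin.sum_univ_eq_sum_range (fun i => if S i = y then 1 else 0)]

lemma prefixCount_congr {S T : ℕ → X} {N : ℕ} (h : ∀ i < N, T i = S i) (y : X) :
    prefixCount T N y = prefixCount S N y := by
  unfold prefixCount
  congr 1
  exact filter_congr fun i hi => by rw [h i (mem_range.mp hi)]

lemma prefixCount_succ (S : ℕ → X) (N : ℕ) (y : X) :
    prefixCount S (N + 1) y = prefixCount S N y + if S N = y then 1 else 0 := by
  simp only [prefixCount, card_filter, sum_range_succ]

lemma prefixCount_deleteAt (S : ℕ → X) {k N : ℕ} (hk : k ≤ N) (y : X) :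
    prefixCount S (N + 1) y = prefixCount (deleteAt S k) N y + if S k = y then 1 else 0 := by
  have hsucc : ∀ i : Fin N, S ((⟨k, by omega⟩ : Fin (N + 1)).succAbove i) = deleteAt S k i := by
    intro i
    by_cases hi : (i : ℕ) < k
    · rw [Fin.succAbove_of_castSucc_lt _ _ hi, deleteAt, if_pos hi, Fin.val_castSucc]
    · rw [Fin.succAbove_of_le_castSucc _ _ (by simpa [Fin.le_def] using hi), deleteAt, if_neg hi,
        Fin.val_succ]
  rw [prefixCount_eq_sum_fin, prefixCount_eq_sum_fin, Fin.sum_univ_succAbove _ ⟨k, by omega⟩,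
    add_comm]
  simp only [hsucc]

lemma prefixCount_comp_swap (S : ℕ → X) {k N : ℕ} (hk : k + 1 < N) (y : X) :
    prefixCount (S ∘ Equiv.swap k (k + 1)) N y = prefixCount S N y := by
  simp only [prefixCount, card_filter, Function.comp_apply]
  refine Equiv.Perm.sum_comp _ _ (fun i => if S i = y then 1 else 0) fun i hi => ?_
  have : i = k ∨ i = k + 1 := by
    by_contra! h
    exact hi (Equiv.swap_apply_of_ne_of_ne h.1 h.2)
  simp only [Set.mem_ofPred_eq, coe_range, Set.mem_Iio] at hi ⊢
  omega

end PrefixCount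

section Satisficing

variable {X : Type*} [DecidableEq X] {w : X → ℝ} {v : ℝ}

/-- The Cardinal Satisficing Rule stops after `N` terms of `S` and selects `x`. -/
def SatisficesAt (w : X → ℝ) (v : ℝ) (S : ℕ → X) (N : ℕ) (x : X) : Prop :=
  v ≤ cumWeight w S N x ∧ ∀ y ≠ x, cumWeight w S N y < v

lemma SatisficesAt.of_prefixCount (hw : ∀ y, 0 ≤ w y) {S T : ℕ → X} {N M : ℕ} {x : X}
    (h : SatisficesAt w v S N x) (hx : prefixCount S N x ≤ prefixCount T M x)
    (hy : ∀ y ≠ x, prefixCount T M y ≤ prefixCount S N y) : SatisficesAt w v T M x := by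
  refine ⟨h.1.trans ?_, fun y hne => lt_of_le_of_lt ?_ (h.2 y hne)⟩
  · simp only [cumWeight_eq_prefixCount_mul]
    exact mul_le_mul_of_nonneg_right (by exact_mod_cast hx) (hw x)
  · simp only [cumWeight_eq_prefixCount_mul]
    exact mul_le_mul_of_nonneg_right (by exact_mod_cast hy y hne) (hw y)

lemma SatisficesAt.congr {S T : ℕ → X} {N : ℕ} {x : X} (h : SatisficesAt w v S N x)
    (hST : ∀ i < N, T i = S i) : SatisficesAt w v T N x := by
  unfold SatisficesAt
  simp only [cumWeight_eq_prefixCount_mul, prefixCount_congr hST]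
  exact h

lemma SatisficesAt.exists_deleteAt (hw : ∀ y, 0 ≤ w y) {S : ℕ → X} {N : ℕ} {x : X}
    (h : SatisficesAt w v S N x) {k : ℕ} (hk : S k ≠ x) :
    ∃ M, SatisficesAt w v (deleteAt S k) M x := by
  rcases le_or_gt N k with hNk | hkN
  · exact ⟨N, h.congr fun i hi => if_pos (hi.trans_le hNk)⟩
  obtain ⟨M, rfl⟩ : ∃ M, N = M + 1 := ⟨N - 1, by omega⟩
  refine ⟨M, h.of_prefixCount hw ?_ fun y _ => ?_⟩ <;>
    rw [prefixCount_deleteAt S (Nat.lt_succ_iff.mp hkN)]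
  · simp [hk]
  · omega

lemma SatisficesAt.exists_comp_swap (hw : ∀ y, 0 ≤ w y) {S : ℕ → X} {N : ℕ} {x : X}
    (h : SatisficesAt w v S N x) {k : ℕ} (hk : S (k + 1) = x) :
    ∃ M, SatisficesAt w v (S ∘ Equiv.swap k (k + 1)) M x := by
  rcases lt_trichotomy N (k + 1) with hN | rfl | hN
  · refine ⟨N, h.congr fun i hi => ?_⟩
    rw [Function.comp_apply, Equiv.swap_apply_of_ne_of_ne (by omega) (by omega)]
  · have hbelow : prefixCount (S ∘ Equiv.swap k (k + 1)) k = prefixCount S k :=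
      funext <| prefixCount_congr fun i hi => by
        rw [Function.comp_apply, Equiv.swap_apply_of_ne_of_ne (by omega) (by omega)]
    refine ⟨k + 1, h.of_prefixCount hw ?_ fun y hy => ?_⟩ <;>
      simp only [prefixCount_succ, hbelow, Function.comp_apply, Equiv.swap_apply_left, hk]
    · split_ifs <;> simp
    · simp [Ne.symm hy]
  · exact ⟨N, h.of_prefixCount hw (prefixCount_comp_swap S hN x).ge
      fun y _ => (prefixCount_comp_swap S hN y).le⟩

end Satisficing

theorem csr_monotonicity_general {X : Type*} [DecidableEq X]
    (w : X → ℝ) (hw : ∀ x, 0 ≤ w x) (v : ℝ)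
    (d : (ℕ → X) → X)
    (hd : ∀ (S : ℕ → X) (x : X), d S = x ↔
      ∃ N : ℕ, v ≤ cumWeight w S N x ∧ ∀ y ≠ x, cumWeight w S N y < v)
    (S : ℕ → X) (x : X) (hx : d S = x) :
    (∀ k : ℕ, S k ≠ x →
      d (fun i => if i < k then S i else S (i + 1)) = x) ∧
    (∀ k : ℕ, S (k + 1) = x →
      d (fun i => if i = k then S (k + 1) else if i = k + 1 then S k else S i) = x) := by
  obtain ⟨N, hN⟩ : ∃ N, SatisficesAt w v S N x := (hd S x).mp hx
  refine ⟨fun k hk => (hd _ x).mpr (hN.exists_deleteAt hw hk), fun k hk => ?_⟩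
  have hswap : (fun i => if i = k then S (k + 1) else if i = k + 1 then S k else S i) =
      S ∘ Equiv.swap k (k + 1) := by
    funext i
    simp only [Function.comp_apply, Equiv.swap_apply_def, apply_ite S]
  rw [hswap]
  exact (hd _ x).mpr (hN.exists_comp_swap hw hk)

/-- The Cardinal Satisficing Rule satisfies Monotonicity: the choice is preserved
under favorable deletions and favorable shifts with respect to the chosen alternative. -/
theorem csr_monotonicity {X : Type*} [Finite X] [DecidableEq X]
    (w : X → ℝ) (hw : ∀ x, 0 ≤ w x) (v : ℝ) (hv : 0 < v)
    (d : (ℕ → X) → X)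
    (hd : ∀ (S : ℕ → X) (x : X), d S = x ↔
      ∃ N : ℕ, v ≤ cumWeight w S N x ∧ ∀ y ≠ x, cumWeight w S N y < v)
    (hwell : ∀ S : ℕ → X, ∃! x : X,
      ∃ N : ℕ, v ≤ cumWeight w S N x ∧ ∀ y ≠ x, cumWeight w S N y < v)
    (S : ℕ → X) (x : X) (hx : d S = x) :
    (∀ k : ℕ, S k ≠ x →
      d (fun i => if i < k then S i else S (i + 1)) = x) ∧
    (∀ k : ℕ, S (k + 1) = x →
      d (fun i => if i = k then S (k + 1) else if i = k + 1 then S k else S i) = x) :=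
  csr_monotonicity_general w hw v d hd S x hx
end

section
/- Let X be a finite set and Y a set, and suppose d : (ℕ → X) → Y is computable by a machine that halts on every input after reading only finitely many input symbols (i.e., for every S there exists k such that the output of the machine on S depends only on S(1),…,S(k)). Then d is a stopping rule, and hence (by the uniform-stopping theorem) there is a single K such that d(S) depends only on the first K terms of S; consequently d factors through the finite set X^K: there exists g : (Fin K → X) → Y with d(S) = g(S|_K) for all S. -/
/-- A computable rule (one which on every input halts after reading finitely many
symbols, i.e. a stopping rule) is uniform-stopping and factors through the finite
set of words of some fixed length `K`: computable implies automaton-computable. -/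
theorem computable_factors_through_finite_words {X Y : Type*} [Finite X] [Nonempty X]
    (d : (ℕ → X) → Y)
    (hhalt : ∀ S : ℕ → X, ∃ k : ℕ, ∀ T : ℕ → X, d (concat S k T) = d S) :
    ∃ (K : ℕ) (g : (Fin K → X) → Y),
      (∀ (S T : ℕ → X), d (concat S K T) = d S) ∧
      ∀ S : ℕ → X, d S = g (fun i : Fin K => S i) := by
  classical
  choose k hk using hhalt
  have key : ∀ S U : ℕ → X, (∀ i, i < k S → U i = S i) → d U = d S := by
    intro S U h
    have hUe : concat S (k S) (fun i => U (i + k S)) = U := by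
      funext i
      simp only [concat]
      split
      · exact (h i ‹_›).symm
      · congr 1; omega
    rw [← hUe]; exact hk S _
  letI : TopologicalSpace X := ⊥
  haveI : DiscreteTopology X := ⟨rfl⟩
  set C : (ℕ → X) → Set (ℕ → X) := fun S => {U | ∀ i, i < k S → U i = S i} with hC
  have hopen : ∀ S, IsOpen (C S) := by
    intro S
    have hEq : C S = ⋂ i ∈ Finset.range (k S), (fun U : ℕ → X => U i) ⁻¹' {S i} := by
      ext U; simp [hC]
    rw [hEq]
    exact isOpen_biInter_finset fun i _ =>
      (continuous_apply i).isOpen_preimage _ (isOpen_discrete _)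
  have hcover : Set.univ ⊆ ⋃ S, C S := fun U _ => Set.mem_iUnion.2 ⟨U, fun i _ => rfl⟩
  obtain ⟨t, ht⟩ := isCompact_univ.elim_finite_subcover C hopen hcover
  set K := t.sup k with hK
  have huni : ∀ (S T : ℕ → X), d (concat S K T) = d S := by
    intro S T
    obtain ⟨S₀, hS₀t, hS₀⟩ := Set.mem_iUnion₂.1 (ht (Set.mem_univ S))
    have hkK : k S₀ ≤ K := Finset.le_sup hS₀t
    have h1 : d S = d S₀ := key S₀ S hS₀
    have h2 : d (concat S K T) = d S₀ := by
      apply key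
      intro i hi
      have : i < K := lt_of_lt_of_le hi hkK
      simp only [concat, if_pos this]
      exact hS₀ i hi
    rw [h1, h2]
  refine ⟨K, fun v => d (concat (fun i => if h : i < K then v ⟨i, h⟩ else Classical.arbitrary X)
      K (fun _ => Classical.arbitrary X)), huni, ?_⟩
  intro S
  have hEq : concat (fun i => if h : i < K then (fun j : Fin K => S j) ⟨i, h⟩
        else Classical.arbitrary X) K (fun _ => Classical.arbitrary X)
      = concat S K (fun _ => Classical.arbitrary X) := by
    funext i
    simp only [concat]
    split <;> simp [*]
  exact (huni S _).symm.trans (congrArg d hEq.symm)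
end
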